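/- arXiv:1001.2026 — 3 statements merged into one kernel-verified Lean document; each statement's English description precedes it below -/
import Mathlib

section
/- Let X be a complex separable infinite-dimensional Banach space and let T be a bounded hypercyclic operator on X. Let (x_n)_{n≥1} be a sequence of eigenvectors of T with T x_n = λ_n x_n and |λ_n| = 1, such that the linear span of {x_n : n ≥ 1} is dense in X. Then for every finite subset F of σ_p(T)∩𝕋, the linear span of {x_n : n ∈ A_F} is dense in X, where A_F = {n ≥ 1 : λ_n ∉ F}. -/
open MeasureTheory Filter Topology

open scoped Classical in
/-- Lower density of a set of natural numbers. -/
noncomputable def lowerDensity (A : Set ℕ) : ℝ :=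
  Filter.atTop.liminf fun N : ℕ =>
    (((Finset.range N).filter (fun n => n ∈ A)).card : ℝ) / (N : ℝ)

/-- `x` is a frequently hypercyclic vector for `T`. -/
def FreqHCVector {X : Type*} [NormedAddCommGroup X] [NormedSpace ℂ X]
    (T : X →L[ℂ] X) (x : X) : Prop :=
  ∀ U : Set X, IsOpen U → U.Nonempty → 0 < lowerDensity {n : ℕ | (T ^ n) x ∈ U}

/-- `T` is frequently hypercyclic. -/
def FrequentlyHypercyclic {X : Type*} [NormedAddCommGroup X] [NormedSpace ℂ X]
    (T : X →L[ℂ] X) : Prop :=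
  ∃ x : X, FreqHCVector T x

/-- `T` is hypercyclic. -/
def Hypercyclic {X : Type*} [NormedAddCommGroup X] [NormedSpace ℂ X]
    (T : X →L[ℂ] X) : Prop :=
  ∃ x : X, Dense (Set.range fun n : ℕ => (T ^ n) x)

/-- `T` has a perfectly spanning set of eigenvectors associated to unimodular
eigenvalues: there is a continuous (atomless) probability measure `σ` on the unit
circle such that whenever `A` is a measurable subset of the circle with `σ A = 1`,
the span of the eigenspaces `ker (T - c)`, `c ∈ A`, is dense in `X`. -/
def PerfectlySpanning {X : Type*} [NormedAddCommGroup X] [NormedSpace ℂ X]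
    (T : X →L[ℂ] X) : Prop :=
  ∃ σ : Measure ℂ, IsProbabilityMeasure σ ∧ (∀ c : ℂ, σ {c} = 0) ∧
    σ {c : ℂ | ‖c‖ = 1} = 1 ∧
    ∀ A : Set ℂ, A ⊆ {c : ℂ | ‖c‖ = 1} → MeasurableSet A → σ A = 1 →
      Dense (Submodule.span ℂ (⋃ c ∈ A, {x : X | T x = c • x}) : Set X)

/-!
If `T` is hypercyclic, every `T - c` has dense range: otherwise a nonzero functional `f` with
`f ∘ T = c • f` would map a dense orbit `Tⁿ v` onto the sequence `cⁿ f v`, which is never dense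
in `ℂ`. Applying `T - a` to a dense span of eigenvectors kills exactly the `x n` with
`lam n = a` and rescales the others, so the eigenvalues in `F` can be removed one at a time.
-/

theorem Submodule.exists_dual_ne_zero_forall_eq_zero_of_not_dense {𝕜 E : Type*} [RCLike 𝕜]
    [NormedAddCommGroup E] [NormedSpace 𝕜 E] (p : Submodule 𝕜 E) (hp : ¬ Dense (p : Set E)) :
    ∃ f : StrongDual 𝕜 E, f ≠ 0 ∧ ∀ v ∈ p, f v = 0 := by
  set M := p.topologicalClosure
  have : IsClosed (M : Set E) := p.isClosed_topologicalClosure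
  obtain ⟨z, hz⟩ : ∃ z, z ∉ M := by
    by_contra! h
    exact hp (dense_iff_closure_eq.2 (Set.eq_univ_of_forall
      (by simpa [M, ← Submodule.topologicalClosure_coe] using h)))
  obtain ⟨g, hg⟩ := SeparatingDual.exists_ne_zero (R := 𝕜) (x := M.mkQ z)
    (by simpa [Submodule.Quotient.mk_eq_zero] using hz)
  refine ⟨g.comp M.mkQL, fun h => hg (by simpa using congr($h z)), fun v hv => ?_⟩
  have : M.mkQ v = 0 := (Submodule.Quotient.mk_eq_zero M).2 (p.le_topologicalClosure hv)
  simp [this]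

theorem Complex.not_denseRange_pow_mul (c t : ℂ) : ¬ DenseRange fun n : ℕ => c ^ n * t := by
  intro hd
  have hK : ∀ K : Set ℂ, IsClosed K → K ≠ Set.univ → ¬ Set.range (fun n : ℕ => c ^ n * t) ⊆ K :=
    fun K hK hne hsub => hne (by simpa [hK.closure_eq] using (hd.mono hsub).closure_eq)
  by_cases h : ‖c‖ ≤ 1 ∨ t = 0
  · refine hK (Metric.closedBall 0 ‖t‖) Metric.isClosed_closedBall
      (fun he => NormedSpace.unbounded_univ ℝ ℂ (he ▸ Metric.isBounded_closedBall)) ?_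
    rintro _ ⟨n, rfl⟩
    simp only [Metric.mem_closedBall, dist_zero_right, norm_mul, norm_pow]
    rcases h with h | rfl
    · exact mul_le_of_le_one_left (norm_nonneg t) (pow_le_one₀ (norm_nonneg c) h)
    · simp
  · push Not at h
    refine hK {z | ‖t‖ ≤ ‖z‖} (isClosed_le continuous_const continuous_norm)
      (fun he => ?_) ?_
    · have h0 : (0 : ℂ) ∈ {z : ℂ | ‖t‖ ≤ ‖z‖} := he ▸ Set.mem_univ 0
      simp [h.2] at h0
    · rintro _ ⟨n, rfl⟩
      simp only [Set.mem_ofPred_eq, norm_mul, norm_pow]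
      exact le_mul_of_one_le_left (norm_nonneg t) (one_le_pow₀ h.1.le)

section Hypercyclic

variable {X : Type*} [NormedAddCommGroup X] [NormedSpace ℂ X] {T : X →L[ℂ] X}

theorem Hypercyclic.eq_zero_of_comp_eq_smul (hT : Hypercyclic T) {f : StrongDual ℂ X} {c : ℂ}
    (hf : f.comp T = c • f) : f = 0 := by
  by_contra hf0
  obtain ⟨v, hv⟩ := hT
  have horbit : ∀ n : ℕ, f ((T ^ n) v) = c ^ n * f v := by
    intro n
    induction n with
    | zero => simp
    | succ n ih =>
      calc f ((T ^ (n + 1)) v) = (f.comp T) ((T ^ n) v) := by rw [pow_succ']; rfl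
        _ = c ^ (n + 1) * f v := by rw [hf, pow_succ', mul_assoc, ← ih]; rfl
  have hsurj : Function.Surjective f := LinearMap.surjective (f := (f : Module.Dual ℂ X))
    (fun h => hf0 (ContinuousLinearMap.coe_injective h))
  have := hsurj.denseRange.comp hv f.continuous
  exact Complex.not_denseRange_pow_mul c (f v) (by rwa [Function.comp_def, funext horbit] at this)

theorem Hypercyclic.denseRange_sub_smul_one (hT : Hypercyclic T) (c : ℂ) :
    DenseRange (T - c • (1 : X →L[ℂ] X)) := by
  by_contra h
  obtain ⟨f, hf0, hf⟩ := Submodule.exists_dual_ne_zero_forall_eq_zero_of_not_dense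
    (LinearMap.range ((T - c • 1 : X →L[ℂ] X) : X →ₗ[ℂ] X)) (by rwa [LinearMap.coe_range])
  refine hf0 (hT.eq_zero_of_comp_eq_smul (c := c) (ContinuousLinearMap.ext fun v => ?_))
  simpa [sub_eq_zero] using hf _ (LinearMap.mem_range_self _ v)

end Hypercyclic

theorem Submodule.dense_span_of_denseRange_of_mapsTo {R M N : Type*} [Semiring R]
    [AddCommMonoid M] [Module R M] [TopologicalSpace M]
    [AddCommMonoid N] [Module R N] [TopologicalSpace N]
    {S : M →L[R] N} (hS : DenseRange S) {s : Set M} {t : Set N}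
    (hs : Dense (span R s : Set M)) (hst : Set.MapsTo S s (span R t)) :
    Dense (span R t : Set N) := by
  have hspan : Set.MapsTo S (span R s) (span R t) := fun v hv =>
    (span_le.2 hst : span R s ≤ (span R t).comap (S : M →ₗ[R] N)) hv
  refine dense_closure.1 (hS.mono ?_)
  calc Set.range S = S '' closure (span R s) := by rw [hs.closure_eq, Set.image_univ]
    _ ⊆ closure (S '' span R s) := image_closure_subset_closure_image S.continuous
    _ ⊆ closure (span R t) := closure_mono hspan.image_subset

section Eigenvectors

variable {𝕜 X : Type*} [NormedField 𝕜] [NormedAddCommGroup X] [NormedSpace 𝕜 X]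
  {T : X →L[𝕜] X} {x : ℕ → X} {lam : ℕ → 𝕜}

theorem dense_span_eigenvectors_of_ne (heig : ∀ n, T (x n) = lam n • x n) {a : 𝕜}
    (ha : DenseRange (T - a • (1 : X →L[𝕜] X))) {A : Set ℕ}
    (hA : Dense (Submodule.span 𝕜 (x '' A) : Set X)) :
    Dense (Submodule.span 𝕜 (x '' {n ∈ A | lam n ≠ a}) : Set X) := by
  refine Submodule.dense_span_of_denseRange_of_mapsTo ha hA ?_
  rintro _ ⟨n, hn, rfl⟩
  have hx : (T - a • 1) (x n) = (lam n - a) • x n := by simp [heig n, sub_smul]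
  rw [SetLike.mem_coe, hx]
  by_cases hna : lam n = a
  · simp [hna]
  · exact Submodule.smul_mem _ _ (Submodule.subset_span ⟨n, ⟨hn, hna⟩, rfl⟩)

theorem dense_span_eigenvectors_of_notMem_finite
    (hT : ∀ c : 𝕜, DenseRange (T - c • (1 : X →L[𝕜] X))) (heig : ∀ n, T (x n) = lam n • x n)
    (hspan : Dense (Submodule.span 𝕜 (Set.range x) : Set X)) {F : Set 𝕜} (hF : F.Finite) :
    Dense (Submodule.span 𝕜 (x '' {n | lam n ∉ F}) : Set X) := by
  induction F, hF using Set.Finite.induction_on with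
  | empty => simpa using hspan
  | @insert a F _ _ ih =>
    convert dense_span_eigenvectors_of_ne heig (hT a) ih using 5
    simp [and_comm]

end Eigenvectors

theorem span_eigenvector_sequence_avoiding_finite_set_dense_general
    {X : Type*} [NormedAddCommGroup X] [NormedSpace ℂ X]
    (T : X →L[ℂ] X) (hhc : Hypercyclic T)
    (x : ℕ → X) (lam : ℕ → ℂ)
    (heig : ∀ n, T (x n) = lam n • x n)
    (hspan : Dense (Submodule.span ℂ (Set.range x) : Set X))
    (F : Set ℂ) (hFfin : F.Finite) :
    Dense (Submodule.span ℂ (x '' {n : ℕ | lam n ∉ F}) : Set X) :=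
  dense_span_eigenvectors_of_notMem_finite hhc.denseRange_sub_smul_one heig hspan hFfin

/-- If `T` is a bounded hypercyclic operator and `(x n)` is a sequence of unimodular
eigenvectors of `T` whose span is dense, then for every finite set `F` of unimodular
eigenvalues of `T`, the span of the `x n` whose eigenvalue avoids `F` is still
dense. -/
theorem span_eigenvector_sequence_avoiding_finite_set_dense
    {X : Type*} [NormedAddCommGroup X] [NormedSpace ℂ X] [CompleteSpace X]
    [TopologicalSpace.SeparableSpace X] (hdim : ¬ FiniteDimensional ℂ X)
    (T : X →L[ℂ] X) (hhc : Hypercyclic T)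
    (x : ℕ → X) (lam : ℕ → ℂ)
    (heig : ∀ n, T (x n) = lam n • x n) (hmod : ∀ n, ‖lam n‖ = 1)
    (hspan : Dense (Submodule.span ℂ (Set.range x) : Set X))
    (F : Set ℂ) (hFfin : F.Finite)
    (hFsub : F ⊆ {c : ℂ | ‖c‖ = 1 ∧ ∃ v : X, v ≠ 0 ∧ T v = c • v}) :
    Dense (Submodule.span ℂ (x '' {n : ℕ | lam n ∉ F}) : Set X) :=
  span_eigenvector_sequence_avoiding_finite_set_dense_general T hhc x lam heig hspan F hFfin
end

section
/- Let X be a complex separable infinite-dimensional Banach space and let T be a bounded linear operator on X. Suppose that for every countable subset D of the unit circle 𝕋, the linear span of ⋃_{λ ∈ 𝕋∖D} ker(T − λ) is dense in X. Then there exists a sequence (K_i)_{i≥1} of subsets of 𝕋, each homeomorphic to the Cantor set 2^ω, and a sequence (E_i)_{i≥1} of continuous functions E_i : K_i → S_X into the unit sphere S_X = {x ∈ X : ‖x‖ = 1}, such that T E_i(λ) = λ E_i(λ) for every i ≥ 1 and λ ∈ K_i, and the linear span of {E_i(λ) : i ≥ 1, λ ∈ K_i} is dense in X. -/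
open MeasureTheory Filter Topology

/-!
The unimodular eigenpairs `(c, x)` with `‖x‖ = 1` form a closed set `Z ⊆ ℂ × X`. Discarding the
points of `Z` that have a neighbourhood with only countably many eigenvalues removes countably
many eigenvalues and leaves a closed set `Z'` in which every neighbourhood of a point carries
uncountably many eigenvalues. A Cantor scheme of small closed balls in `Z'` whose sibling balls
have disjoint sets of eigenvalues gives a continuous map from `2^ω` to `Z'` that is injective in
the eigenvalue; its eigenvalues form a Cantor set carrying a continuous eigenvector field, and such
fields pass arbitrarily close to every point of `Z'`. By hypothesis the eigenvectors of the
remaining eigenvalues span a dense subspace, hence so do the fields, and second countability of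
`X` selects countably many of them.
-/

open Function Set Metric

namespace CantorScheme

open PiNat

theorem injective_comp_inducedMap_of_disjoint_image {β α γ : Type*} {A : List β → Set α}
    {g : α → γ} (hA : CantorScheme.Disjoint fun l => g '' A l) :
    Injective (g ∘ (inducedMap A).2) := by
  rintro x y hxy
  ext1
  apply res_injective
  ext n : 1
  induction n with
  | zero => simp
  | succ n ih =>
    simp only [res_succ, List.cons.injEq]
    refine ⟨by_contra fun hne => ?_, ih⟩
    have hx : g ((inducedMap A).2 x) ∈ g '' A (x.1 n :: res x.1 n) :=
      mem_image_of_mem g (map_mem x (n + 1))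
    have hy : g ((inducedMap A).2 y) ∈ g '' A (y.1 n :: res x.1 n) :=
      ih ▸ mem_image_of_mem g (map_mem y (n + 1))
    rw [← show g ((inducedMap A).2 x) = g ((inducedMap A).2 y) from hxy] at hy
    exact disjoint_left.1 (hA _ hne) hx hy

end CantorScheme

section ImageCondensation

variable {α β : Type*} [TopologicalSpace α] (g : α → β) (C : Set α)

/-- For `g = id`, the condensation points of `C` that lie in `C`. -/
def imageCondensationSet : Set α :=
  {x ∈ C | ∀ U ∈ 𝓝 x, ¬(g '' (U ∩ C)).Countable}

variable {C}

theorem isClosed_imageCondensationSet (hC : IsClosed C) :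
    IsClosed (imageCondensationSet g C) := by
  change IsClosed (C ∩ {x | ∀ U ∈ 𝓝 x, ¬(g '' (U ∩ C)).Countable})
  refine hC.inter (isOpen_compl_iff.1 (isOpen_iff_mem_nhds.2 fun x hx => ?_))
  obtain ⟨U, hU, hcount⟩ : ∃ U ∈ 𝓝 x, (g '' (U ∩ C)).Countable := by
    simpa using hx
  filter_upwards [eventually_mem_nhds_iff.2 hU] with y hy
  simpa using ⟨U, hy, hcount⟩

theorem countable_image_diff_imageCondensationSet [SecondCountableTopology α] :
    (g '' (C \ imageCondensationSet g C)).Countable := by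
  let 𝓑 := {B ∈ TopologicalSpace.countableBasis α | (g '' (B ∩ C)).Countable}
  refine ((TopologicalSpace.countable_countableBasis α).mono (sep_subset _ _)).biUnion
    (fun B (hB : B ∈ 𝓑) => hB.2) |>.mono ?_
  rintro _ ⟨x, ⟨hxC, hx⟩, rfl⟩
  obtain ⟨U, hU, hcount⟩ : ∃ U ∈ 𝓝 x, (g '' (U ∩ C)).Countable := by
    simpa [imageCondensationSet, hxC] using hx
  obtain ⟨B, hB, hxB, hBU⟩ := (TopologicalSpace.isBasis_countableBasis α).mem_nhds_iff.1 hU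
  have hBcount : (g '' (B ∩ C)).Countable :=
    hcount.mono (image_mono (inter_subset_inter_left C hBU))
  exact mem_biUnion (x := B) ⟨hB, hBcount⟩ (mem_image_of_mem g ⟨hxB, hxC⟩)

theorem not_countable_image_inter_imageCondensationSet [SecondCountableTopology α] {x : α}
    (hx : x ∈ imageCondensationSet g C) {U : Set α} (hU : U ∈ 𝓝 x) :
    ¬(g '' (U ∩ imageCondensationSet g C)).Countable := fun hcount => by
  refine hx.2 U hU ((hcount.union (countable_image_diff_imageCondensationSet g (C := C))).mono ?_)
  rintro _ ⟨y, ⟨hyU, hyC⟩, rfl⟩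
  by_cases hy : y ∈ imageCondensationSet g C
  · exact Or.inl ⟨y, ⟨hyU, hy⟩, rfl⟩
  · exact Or.inr ⟨y, ⟨hyC, hy⟩, rfl⟩

end ImageCondensation

section CantorInjection

open CantorScheme

variable {α β : Type*} [PseudoMetricSpace α] {g : α → β} {C : Set α}

theorem exists_nat_bool_injective_comp_of_closedBall_scheme [CompleteSpace α] (hCc : IsClosed C)
    {ε : ℝ} (x : List Bool → α) (r : List Bool → ℝ) (hx : ∀ l, x l ∈ C) (hr : ∀ l, 0 ≤ r l)
    (hr_le : ∀ l, r l ≤ ε * 2⁻¹ ^ l.length)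
    (hsub : ∀ l b, closedBall (x (b :: l)) (r (b :: l)) ⊆ closedBall (x l) (r l))
    (hdisj : ∀ l, Disjoint (g '' (C ∩ closedBall (x (false :: l)) (r (false :: l))))
      (g '' (C ∩ closedBall (x (true :: l)) (r (true :: l))))) :
    ∃ f : (ℕ → Bool) → α, Continuous f ∧ Injective (g ∘ f) ∧
      ∀ a, f a ∈ C ∩ closedBall (x []) (r []) := by
  let A : List Bool → Set α := fun l => C ∩ closedBall (x l) (r l)
  have hanti : ClosureAntitone A :=
    Antitone.closureAntitone (fun l b => inter_subset_inter_right C (hsub l b))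
      fun l => hCc.inter isClosed_closedBall
  have hdiam : VanishingDiam A := by
    intro a
    have hlim : Tendsto (fun n : ℕ => ENNReal.ofReal (2 * (ε * 2⁻¹ ^ n))) atTop (𝓝 0) := by
      have h := ((tendsto_pow_atTop_nhds_zero_of_lt_one (r := (2⁻¹ : ℝ)) (by norm_num)
        (by norm_num)).const_mul ε).const_mul 2
      rw [mul_zero, mul_zero] at h
      exact ENNReal.ofReal_zero ▸ ENNReal.tendsto_ofReal h
    refine tendsto_of_tendsto_of_tendsto_of_le_of_le tendsto_const_nhds hlim (fun _ => zero_le)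
      fun n => ediam_le_of_forall_dist_le fun y hy z hz => ?_
    have := hr_le (PiNat.res a n)
    rw [PiNat.res_length] at this
    linarith [dist_triangle_right y z (x (PiNat.res a n)), mem_closedBall.1 hy.2,
      mem_closedBall.1 hz.2]
  have hdisj' : CantorScheme.Disjoint fun l => g '' A l := by
    rintro l (_ | _) (_ | _) hne
    exacts [absurd rfl hne, hdisj l, (hdisj l).symm, absurd rfl hne]
  have hdom : ∀ a, a ∈ (inducedMap A).1 := fun a => by
    rw [hanti.map_of_vanishingDiam hdiam fun l => ⟨x l, hx l, mem_closedBall_self (hr l)⟩]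
    exact mem_univ a
  exact ⟨fun a => (inducedMap A).2 ⟨a, hdom a⟩, hdiam.map_continuous.comp (by fun_prop),
    (injective_comp_inducedMap_of_disjoint_image hdisj').comp fun a b h => congrArg Subtype.val h,
    fun a => map_mem ⟨a, hdom a⟩ 0⟩

theorem exists_closedBall_pair_disjoint_image [TopologicalSpace β] [T2Space β] (hg : Continuous g)
    (hC : ∀ x ∈ C, ∀ U ∈ 𝓝 x, (g '' (U ∩ C)).Nontrivial) {x : α} (hx : x ∈ C) {r : ℝ}
    (hr : 0 < r) :
    ∃ y₀ ∈ C, ∃ y₁ ∈ C, ∃ ρ > 0, ρ ≤ r / 2 ∧ closedBall y₀ ρ ⊆ ball x r ∧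
      closedBall y₁ ρ ⊆ ball x r ∧
      Disjoint (g '' (C ∩ closedBall y₀ ρ)) (g '' (C ∩ closedBall y₁ ρ)) := by
  obtain ⟨_, ⟨y₀, ⟨hy₀r, hy₀C⟩, rfl⟩, _, ⟨y₁, ⟨hy₁r, hy₁C⟩, rfl⟩, hne⟩ :=
    hC x hx _ (ball_mem_nhds x hr)
  obtain ⟨V₀, V₁, hV₀, hV₁, hy₀V, hy₁V, hV⟩ := t2_separation hne
  obtain ⟨ρ₀, hρ₀, hsub₀⟩ := nhds_basis_closedBall.mem_iff.1 <|
    inter_mem (isOpen_ball.mem_nhds hy₀r) (hg.continuousAt.preimage_mem_nhds (hV₀.mem_nhds hy₀V))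
  obtain ⟨ρ₁, hρ₁, hsub₁⟩ := nhds_basis_closedBall.mem_iff.1 <|
    inter_mem (isOpen_ball.mem_nhds hy₁r) (hg.continuousAt.preimage_mem_nhds (hV₁.mem_nhds hy₁V))
  set ρ := min (min ρ₀ ρ₁) (r / 2)
  have hρ₀' : closedBall y₀ ρ ⊆ ball x r ∩ g ⁻¹' V₀ :=
    (closedBall_subset_closedBall ((min_le_left _ _).trans (min_le_left _ _))).trans hsub₀
  have hρ₁' : closedBall y₁ ρ ⊆ ball x r ∩ g ⁻¹' V₁ :=
    (closedBall_subset_closedBall ((min_le_left _ _).trans (min_le_right _ _))).trans hsub₁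
  refine ⟨y₀, hy₀C, y₁, hy₁C, ρ, by positivity, min_le_right _ _,
    fun y hy => (hρ₀' hy).1, fun y hy => (hρ₁' hy).1, hV.mono ?_ ?_⟩
  · rintro _ ⟨y, ⟨-, hy⟩, rfl⟩
    exact (hρ₀' hy).2
  · rintro _ ⟨y, ⟨-, hy⟩, rfl⟩
    exact (hρ₁' hy).2

/-- For `g = id` this is `Perfect.exists_nat_bool_injection`, localized near `p`. -/
theorem exists_nat_bool_injective_comp [TopologicalSpace β] [T2Space β] [CompleteSpace α]
    (hg : Continuous g) (hCc : IsClosed C)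
    (hC : ∀ x ∈ C, ∀ U ∈ 𝓝 x, (g '' (U ∩ C)).Nontrivial) {p : α}
    (hp : p ∈ C) {ε : ℝ} (hε : 0 < ε) :
    ∃ f : (ℕ → Bool) → α, Continuous f ∧ Injective (g ∘ f) ∧ ∀ a, f a ∈ C ∩ closedBall p ε := by
  choose! y₀ hy₀ y₁ hy₁ ρ hρ hρr hsub₀ hsub₁ hdisj using
    fun x (hx : x ∈ C) r (hr : 0 < r) => exists_closedBall_pair_disjoint_image hg hC hx hr
  let node : List Bool → α × ℝ := fun l =>
    l.foldr (fun b q => ((bif b then y₁ else y₀) q.1 q.2, ρ q.1 q.2)) (p, ε)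
  have hnode : ∀ l, (node l).1 ∈ C ∧ 0 < (node l).2 ∧ (node l).2 ≤ ε * 2⁻¹ ^ l.length := by
    intro l
    induction l with
    | nil => simp [node, hp, hε]
    | cons b l ih =>
      obtain ⟨hC', hpos, hle⟩ := ih
      refine ⟨?_, hρ _ hC' _ hpos, (hρr _ hC' _ hpos).trans ?_⟩
      · cases b
        exacts [hy₀ _ hC' _ hpos, hy₁ _ hC' _ hpos]
      · rw [List.length_cons, pow_succ]
        linarith
  refine exists_nat_bool_injective_comp_of_closedBall_scheme hCc (fun l => (node l).1)
    (fun l => (node l).2) (fun l => (hnode l).1) (fun l => (hnode l).2.1.le)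
    (fun l => (hnode l).2.2) (fun l b => ?_) fun l => hdisj _ (hnode l).1 _ (hnode l).2.1
  obtain ⟨hC', hpos, -⟩ := hnode l
  refine Subset.trans ?_ ball_subset_closedBall
  cases b
  exacts [hsub₀ _ hC' _ hpos, hsub₁ _ hC' _ hpos]

end CantorInjection

theorem Topology.IsEmbedding.continuousOn_extend_range {Z β γ : Type*} [TopologicalSpace Z]
    [TopologicalSpace β] [TopologicalSpace γ] {h : Z → β} (hh : IsEmbedding h) {F : Z → γ}
    (hF : Continuous F) (e : β → γ) : ContinuousOn (extend h F e) (range h) := by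
  rw [continuousOn_iff_continuous_domRestrict]
  have : (range h).domRestrict (extend h F e) = F ∘ hh.toHomeomorph.symm := by
    ext ⟨_, w, rfl⟩
    simp [hh.injective.extend_apply]
  rw [this]
  exact hF.comp hh.toHomeomorph.symm.continuous

theorem Dense.span_of_subset_topologicalClosure {R M : Type*} [Semiring R] [AddCommMonoid M]
    [Module R M] [TopologicalSpace M] [ContinuousAdd M] [ContinuousConstSMul R M] {s t : Set M}
    (hs : Dense (Submodule.span R s : Set M)) (hst : s ⊆ (Submodule.span R t).topologicalClosure) :
    Dense (Submodule.span R t : Set M) :=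
  dense_closure.1 <| hs.mono (Submodule.span_le.2 hst)

theorem exists_nat_dense_span_iUnion {ι R M : Type*} [Nonempty ι] [Semiring R] [AddCommMonoid M]
    [Module R M] [TopologicalSpace M] [SecondCountableTopology M] [ContinuousAdd M]
    [ContinuousConstSMul R M] {S : ι → Set M}
    (hS : Dense (Submodule.span R (⋃ j, S j) : Set M)) :
    ∃ σ : ℕ → ι, Dense (Submodule.span R (⋃ n, S (σ n)) : Set M) := by
  obtain ⟨t, htc, htd⟩ := TopologicalSpace.exists_countable_dense (⋃ j, S j)
  have hj : ∀ y ∈ t, ∃ j, y.1 ∈ S j := fun y _ => mem_iUnion.1 y.2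
  choose! j hj using hj
  obtain ⟨σ, hσ⟩ :=
    ((htc.image j).insert (Classical.arbitrary ι)).exists_eq_range (insert_nonempty _ _)
  refine ⟨σ, hS.span_of_subset_topologicalClosure (Subtype.dense_iff.1 htd |>.trans ?_)⟩
  refine (closure_mono ?_).trans (Submodule.closure_subset_topologicalClosure_span _)
  rintro _ ⟨y, hy, rfl⟩
  obtain ⟨n, hn⟩ : j y ∈ range σ := hσ ▸ mem_insert_of_mem _ (mem_image_of_mem j hy)
  exact mem_iUnion.2 ⟨n, hn ▸ hj y hy⟩

theorem nonempty_of_dense_span_iUnion {ι R M : Type*} [Semiring R] [AddCommMonoid M] [Module R M]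
    [TopologicalSpace M] [T1Space M] [Nontrivial M] {S : ι → Set M}
    (hS : Dense (Submodule.span R (⋃ j, S j) : Set M)) : Nonempty ι := by
  by_contra hι
  rw [not_nonempty_iff] at hι
  simp only [iUnion_of_empty, Submodule.span_empty, Submodule.bot_coe] at hS
  obtain ⟨x, hx⟩ := exists_ne (0 : M)
  have : x ∈ closure ({0} : Set M) := hS.closure_eq ▸ mem_univ x
  exact hx (by simpa using this)

section Eigenvectors

variable {X : Type*} [NormedAddCommGroup X] [NormedSpace ℂ X] (T : X →L[ℂ] X)

def unitEigenpairs : Set (ℂ × X) := {p | ‖p.1‖ = 1 ∧ ‖p.2‖ = 1 ∧ T p.2 = p.1 • p.2}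

theorem isClosed_unitEigenpairs : IsClosed (unitEigenpairs T) :=
  (isClosed_eq (by fun_prop) continuous_const).inter <|
    (isClosed_eq (by fun_prop) continuous_const).inter (isClosed_eq (by fun_prop) (by fun_prop))

theorem mk_inv_norm_smul_mem_unitEigenpairs {c : ℂ} (hc : ‖c‖ = 1) {x : X} (hx : x ≠ 0)
    (hT : T x = c • x) : (c, (‖x‖ : ℂ)⁻¹ • x) ∈ unitEigenpairs T :=
  ⟨hc, by simp [norm_smul, hx], by rw [map_smul, hT, smul_comm]⟩

structure CantorEigenvectorField where
  K : Set ℂ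
  E : ℂ → X
  subset_sphere : K ⊆ {c : ℂ | ‖c‖ = 1}
  nonempty_homeomorph : Nonempty (K ≃ₜ (ℕ → Bool))
  continuousOn : ContinuousOn E K
  norm_eq_one : ∀ c ∈ K, ‖E c‖ = 1
  apply_eq_smul : ∀ c ∈ K, T (E c) = c • E c

variable {T}

noncomputable def CantorEigenvectorField.ofInjective {f : (ℕ → Bool) → ℂ × X}
    (hf : Continuous f) (hinj : Injective (Prod.fst ∘ f)) (hZ : ∀ a, f a ∈ unitEigenpairs T) :
    CantorEigenvectorField T where
  K := range (Prod.fst ∘ f)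
  -- `f` read back through its injective eigenvalue map; the value `0` off `K` is junk.
  E := extend (Prod.fst ∘ f) (Prod.snd ∘ f) 0
  subset_sphere := by
    rintro _ ⟨a, rfl⟩
    exact (hZ a).1
  nonempty_homeomorph :=
    ⟨((continuous_fst.comp hf).isClosedEmbedding hinj).isEmbedding.toHomeomorph.symm⟩
  continuousOn := ((continuous_fst.comp hf).isClosedEmbedding hinj).isEmbedding
    |>.continuousOn_extend_range (continuous_snd.comp hf) 0
  norm_eq_one := by
    rintro _ ⟨a, rfl⟩
    rw [hinj.extend_apply]
    exact (hZ a).2.1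
  apply_eq_smul := by
    rintro _ ⟨a, rfl⟩
    rw [hinj.extend_apply]
    exact (hZ a).2.2

theorem mem_closure_iUnion_cantorEigenvectorField [CompleteSpace X] [SecondCountableTopology X]
    {c : ℂ} {x : X} (hx : (c, x) ∈ imageCondensationSet Prod.fst (unitEigenpairs T)) :
    x ∈ closure (⋃ F : CantorEigenvectorField T, F.E '' F.K) := by
  refine Metric.mem_closure_iff.2 fun ε hε => ?_
  obtain ⟨f, hf, hinj, hfC⟩ := exists_nat_bool_injective_comp continuous_fst
    (isClosed_imageCondensationSet _ (isClosed_unitEigenpairs T))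
    (fun p hp U hU => not_subsingleton_iff.1 fun hs =>
      not_countable_image_inter_imageCondensationSet _ hp hU hs.countable)
    hx (half_pos hε)
  let F := CantorEigenvectorField.ofInjective hf hinj fun a => (hfC a).1.1
  let a : ℕ → Bool := fun _ => false
  refine ⟨(f a).2, mem_iUnion.2 ⟨F, (f a).1, mem_range_self a, hinj.extend_apply _ _ a⟩, ?_⟩
  calc dist x (f a).2 = dist (f a).2 (c, x).2 := dist_comm _ _
    _ ≤ dist (f a) (c, x) := by rw [Prod.dist_eq]; exact le_max_right _ _
    _ ≤ ε / 2 := (hfC a).2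
    _ < ε := half_lt_self hε

theorem dense_span_iUnion_cantorEigenvectorField [CompleteSpace X] [SecondCountableTopology X]
    (h : ∀ D : Set ℂ, D.Countable →
      Dense (Submodule.span ℂ (⋃ c ∈ {c : ℂ | ‖c‖ = 1} \ D, {x : X | T x = c • x}) : Set X)) :
    Dense (Submodule.span ℂ (⋃ F : CantorEigenvectorField T, F.E '' F.K) : Set X) := by
  refine (h _ (countable_image_diff_imageCondensationSet Prod.fst (C := unitEigenpairs T))
    |>.span_of_subset_topologicalClosure (iUnion₂_subset fun c ⟨hc, hcD⟩ x hx => ?_))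
  rcases eq_or_ne x 0 with rfl | hx0
  · exact zero_mem _
  have hu : (c, (‖x‖ : ℂ)⁻¹ • x) ∈ imageCondensationSet Prod.fst (unitEigenpairs T) := by
    by_contra hu
    exact hcD ⟨_, ⟨mk_inv_norm_smul_mem_unitEigenpairs T hc hx0 hx, hu⟩, rfl⟩
  have hxu : x = (‖x‖ : ℂ) • ((‖x‖ : ℂ)⁻¹ • x) := by
    rw [smul_smul, mul_inv_cancel₀ (by simpa using hx0), one_smul]
  rw [hxu]
  exact Submodule.smul_mem _ _ <| Submodule.closure_subset_topologicalClosure_span _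
    (mem_closure_iUnion_cantorEigenvectorField hu)

end Eigenvectors

/-- If removing any countable set of unimodular eigenvalues leaves a spanning set of
eigenvectors, then the unimodular eigenvectors of `T` can be parametrized by
countably many continuous eigenvector fields defined on Cantor subsets of the unit
circle. -/
theorem countable_removal_implies_cantor_eigenvector_fields
    {X : Type*} [NormedAddCommGroup X] [NormedSpace ℂ X] [CompleteSpace X]
    [TopologicalSpace.SeparableSpace X] (hdim : ¬ FiniteDimensional ℂ X)
    (T : X →L[ℂ] X)
    (h : ∀ D : Set ℂ, D.Countable →
      Dense (Submodule.span ℂ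
        (⋃ c ∈ {c : ℂ | ‖c‖ = 1} \ D, {x : X | T x = c • x}) : Set X)) :
    ∃ (K : ℕ → Set ℂ) (E : ℕ → ℂ → X),
      (∀ i, K i ⊆ {c : ℂ | ‖c‖ = 1}) ∧
      (∀ i, Nonempty (K i ≃ₜ (ℕ → Bool))) ∧
      (∀ i, ContinuousOn (E i) (K i)) ∧
      (∀ i, ∀ c ∈ K i, ‖E i c‖ = 1) ∧
      (∀ i, ∀ c ∈ K i, T (E i c) = c • E i c) ∧
      Dense (Submodule.span ℂ (⋃ i, E i '' K i) : Set X) := by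
  have : Nontrivial X := not_subsingleton_iff_nontrivial.1 fun _ => hdim inferInstance
  have hdense := dense_span_iUnion_cantorEigenvectorField h
  have := nonempty_of_dense_span_iUnion hdense
  obtain ⟨σ, hσ⟩ := exists_nat_dense_span_iUnion hdense
  exact ⟨fun i => (σ i).K, fun i => (σ i).E, fun i => (σ i).subset_sphere,
    fun i => (σ i).nonempty_homeomorph, fun i => (σ i).continuousOn, fun i => (σ i).norm_eq_one,
    fun i => (σ i).apply_eq_smul, hσ⟩
end

section
/- Let X be a complex separable infinite-dimensional Banach space and let T be a bounded linear operator on X. Suppose there exists a sequence (K_i)_{i≥1} of subsets of the unit circle 𝕋, each homeomorphic to the Cantor set 2^ω, and a sequence (E_i)_{i≥1} of continuous functions E_i : K_i → S_X into the unit sphere S_X = {x ∈ X : ‖x‖ = 1}, such that T E_i(λ) = λ E_i(λ) for every i ≥ 1 and λ ∈ K_i, and the linear span of {E_i(λ) : i ≥ 1, λ ∈ K_i} is dense in X. Then T has a perfectly spanning set of eigenvectors associated to unimodular eigenvalues. -/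
open MeasureTheory Filter Topology

/-! The Haar measure of `(ℤ/2)^ℕ`, pushed forward to a Cantor set `K ⊆ 𝕋`, is an atomless
probability measure charging every relatively open subset of `K`. A weighted sum `σ` of these
measures over the `K i` is atomless, lives on `𝕋`, and has exactly the null sets common to all of
them. So if `σ A = 1`, then `A ∩ K i` is dense in `K i`, and by continuity every `E i λ` is a limit
of eigenvectors `E i μ` with `μ ∈ A`: the span of the eigenvectors with eigenvalues in `A` is dense.
-/

open scoped ENNReal

theorem Pi.nhdsNE_neBot {ι : Type*} [Infinite ι] {M : ι → Type*}
    [∀ i, TopologicalSpace (M i)] [∀ i, Nontrivial (M i)] (x : ∀ i, M i) : (𝓝[≠] x).NeBot := by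
  classical
  rw [← mem_closure_iff_nhdsWithin_neBot, mem_closure_iff]
  intro U hU hxU
  obtain ⟨I, s, hs, hsub⟩ := isOpen_pi_iff.1 hU x hxU
  obtain ⟨n, hn⟩ := I.exists_notMem
  obtain ⟨y, hy⟩ := exists_ne (x n)
  refine ⟨Function.update x n y, hsub fun i hi => ?_, fun h => hy ?_⟩
  · rw [Function.update_of_ne (by rintro rfl; exact hn hi)]
    exact (hs i hi).2
  · simpa using congrFun h n

theorem exists_isProbabilityMeasure_cantorGroup :
    ∃ ν : Measure (ℕ → ZMod 2),
      IsProbabilityMeasure ν ∧ NullSingletonClass ν ∧ ν.IsOpenPosMeasure := by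
  have : (𝓝[≠] (0 : ℕ → ZMod 2)).NeBot := Pi.nhdsNE_neBot 0
  have hunit :=
    Measure.addHaarMeasure_self (K₀ := (⊤ : TopologicalSpace.PositiveCompacts (ℕ → ZMod 2)))
  exact ⟨Measure.addHaarMeasure ⊤, ⟨by simpa using hunit⟩, inferInstance, inferInstance⟩

section Pushforward

variable {Y α : Type*} [MeasurableSpace Y] [MeasurableSpace α] {ν : Measure Y} {f : Y → α}

theorem MeasurableEmbedding.nullSingletonClass_map [NullSingletonClass ν]
    (hf : MeasurableEmbedding f) : NullSingletonClass (ν.map f) :=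
  ⟨fun c => by
    rw [hf.map_apply]
    exact Set.Subsingleton.measure_zero (fun _ hx _ hy => hf.injective (hx.trans hy.symm)) ν⟩

theorem MeasurableEmbedding.map_apply_compl_range (hf : MeasurableEmbedding f) :
    ν.map f (Set.range f)ᶜ = 0 := by
  simp [hf.map_apply]

theorem Continuous.map_apply_pos_of_isOpen [TopologicalSpace Y] [TopologicalSpace α]
    [OpensMeasurableSpace Y] [BorelSpace α] [ν.IsOpenPosMeasure] (hf : Continuous f)
    {U : Set α} (hU : IsOpen U) (hUf : (U ∩ Set.range f).Nonempty) : 0 < ν.map f U := by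
  obtain ⟨_, hyU, y, rfl⟩ := hUf
  rw [Measure.map_apply hf.measurable hU.measurableSet]
  exact (hU.preimage hf).measure_pos ν ⟨y, hyU⟩

end Pushforward

theorem exists_isProbabilityMeasure_of_homeomorph_cantor {α : Type*} [TopologicalSpace α]
    [T2Space α] [MeasurableSpace α] [BorelSpace α] {K : Set α} (e : K ≃ₜ (ℕ → Bool)) :
    ∃ μ : Measure α, IsProbabilityMeasure μ ∧ NullSingletonClass μ ∧ μ Kᶜ = 0 ∧
      ∀ U, IsOpen U → (U ∩ K).Nonempty → 0 < μ U := by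
  obtain ⟨ν, hν, hνatom, hνpos⟩ := exists_isProbabilityMeasure_cantorGroup
  let toBool : (ℕ → ZMod 2) ≃ₜ (ℕ → Bool) := Homeomorph.piCongrRight fun _ =>
    { toEquiv := finTwoEquiv
      continuous_toFun := continuous_of_discreteTopology
      continuous_invFun := continuous_of_discreteTopology }
  let f : (ℕ → ZMod 2) → α := Subtype.val ∘ e.symm ∘ toBool
  have hf_cont : Continuous f :=
    continuous_subtype_val.comp (e.symm.continuous.comp toBool.continuous)
  have hf_emb : MeasurableEmbedding f :=
    (hf_cont.isClosedEmbedding (Subtype.val_injective.comp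
      (e.symm.injective.comp toBool.injective))).measurableEmbedding
  have hf_range : Set.range f = K := by
    simp [f, Set.range_comp, e.symm.range_coe, toBool.range_coe]
  refine ⟨ν.map f, Measure.isProbabilityMeasure_map hf_cont.aemeasurable,
    hf_emb.nullSingletonClass_map, hf_range ▸ hf_emb.map_apply_compl_range,
    fun U hU hUK => hf_cont.map_apply_pos_of_isOpen hU (hf_range ▸ hUK)⟩

theorem exists_isProbabilityMeasure_null_iff {α : Type*} [MeasurableSpace α]
    (μ : ℕ → Measure α) [∀ i, IsProbabilityMeasure (μ i)] :
    ∃ σ : Measure α, IsProbabilityMeasure σ ∧ ∀ s, σ s = 0 ↔ ∀ i, μ i s = 0 := by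
  have hw : ∀ i : ℕ, (2⁻¹ : ℝ≥0∞) ^ (i + 1) ≠ 0 := fun i => pow_ne_zero _ (by simp)
  refine ⟨Measure.sum fun i => (2⁻¹ : ℝ≥0∞) ^ (i + 1) • μ i, ⟨?_⟩, fun s => ?_⟩
  · simp only [Measure.sum_apply _ MeasurableSet.univ, Measure.smul_apply, measure_univ,
      smul_eq_mul, mul_one, ENNReal.tsum_geometric_add_one, ENNReal.one_sub_inv_two, inv_inv]
    exact ENNReal.inv_mul_cancel (by norm_num) (by norm_num)
  · simp [Measure.sum_apply_eq_zero, hw]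

theorem subset_closure_inter_of_measure_compl_eq_zero {α : Type*} [TopologicalSpace α]
    [MeasurableSpace α] {μ : Measure α} {K A : Set α}
    (hpos : ∀ U, IsOpen U → (U ∩ K).Nonempty → 0 < μ U) (hK : μ Kᶜ = 0) (hA : μ Aᶜ = 0) :
    K ⊆ closure (A ∩ K) := by
  intro c hc
  rw [mem_closure_iff]
  intro U hU hcU
  by_contra hempty
  have hUsub : U ⊆ Aᶜ ∪ Kᶜ := fun x hxU => by
    by_contra hx
    simp only [Set.mem_union, Set.mem_compl_iff, not_or, not_not] at hx
    exact hempty ⟨x, hxU, hx⟩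
  exact (hpos U hU ⟨c, hcU, hc⟩).ne' (measure_mono_null hUsub (measure_union_null hA hK))

theorem Submodule.dense_span_of_subset_closure {R M : Type*} [Semiring R] [AddCommMonoid M]
    [Module R M] [TopologicalSpace M] [ContinuousAdd M] [ContinuousConstSMul R M] {s t : Set M}
    (hs : Dense (span R s : Set M)) (hst : s ⊆ closure (span R t)) :
    Dense (span R t : Set M) :=
  dense_closure.1 (hs.mono (span_le.2 hst : span R s ≤ (span R t).topologicalClosure))

theorem cantor_eigenvector_fields_implies_perfectlySpanning_general
    {X : Type*} [NormedAddCommGroup X] [NormedSpace ℂ X]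
    (T : X →L[ℂ] X) (K : ℕ → Set ℂ) (E : ℕ → ℂ → X)
    (hK : ∀ i, K i ⊆ {c : ℂ | ‖c‖ = 1})
    (hcantor : ∀ i, Nonempty (K i ≃ₜ (ℕ → Bool)))
    (hcont : ∀ i, ContinuousOn (E i) (K i))
    (heig : ∀ i, ∀ c ∈ K i, T (E i c) = c • E i c)
    (hdense : Dense (Submodule.span ℂ (⋃ i, E i '' K i) : Set X)) :
    PerfectlySpanning T := by
  choose μ hμ hμatom hμK hμpos using
    fun i => exists_isProbabilityMeasure_of_homeomorph_cantor (hcantor i).some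
  obtain ⟨σ, hσ, hσnull⟩ := exists_isProbabilityMeasure_null_iff μ
  have hcircle : MeasurableSet {c : ℂ | ‖c‖ = 1} :=
    (isClosed_eq continuous_norm continuous_const).measurableSet
  refine ⟨σ, hσ, fun c => (hσnull _).2 fun i => measure_singleton c, ?_, fun A _ hA hA1 => ?_⟩
  · rw [← prob_compl_eq_zero_iff hcircle, hσnull]
    exact fun i => measure_mono_null (Set.compl_subset_compl.2 (hK i)) (hμK i)
  have hAc : ∀ i, μ i Aᶜ = 0 := (hσnull _).1 ((prob_compl_eq_zero_iff hA).2 hA1)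
  refine Submodule.dense_span_of_subset_closure hdense ?_
  rintro _ ⟨_, ⟨i, rfl⟩, c, hc, rfl⟩
  have hAK := subset_closure_inter_of_measure_compl_eq_zero (hμpos i) (hμK i) (hAc i)
  have hEc := ((hcont i c hc).mono Set.inter_subset_right).mem_closure_image (hAK hc)
  refine closure_mono ?_ hEc
  rintro _ ⟨d, ⟨hdA, hdK⟩, rfl⟩
  exact Submodule.subset_span (Set.mem_biUnion hdA (heig i d hdK))

/-- If the unimodular eigenvectors of `T` can be parametrized by countably many
continuous eigenvector fields defined on Cantor subsets of the unit circle, then `T`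
has a perfectly spanning set of unimodular eigenvectors. -/
theorem cantor_eigenvector_fields_implies_perfectlySpanning
    {X : Type*} [NormedAddCommGroup X] [NormedSpace ℂ X] [CompleteSpace X]
    [TopologicalSpace.SeparableSpace X] (hdim : ¬ FiniteDimensional ℂ X)
    (T : X →L[ℂ] X) (K : ℕ → Set ℂ) (E : ℕ → ℂ → X)
    (hK : ∀ i, K i ⊆ {c : ℂ | ‖c‖ = 1})
    (hcantor : ∀ i, Nonempty (K i ≃ₜ (ℕ → Bool)))
    (hcont : ∀ i, ContinuousOn (E i) (K i))
    (hnorm : ∀ i, ∀ c ∈ K i, ‖E i c‖ = 1)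
    (heig : ∀ i, ∀ c ∈ K i, T (E i c) = c • E i c)
    (hdense : Dense (Submodule.span ℂ (⋃ i, E i '' K i) : Set X)) :
    PerfectlySpanning T :=
  cantor_eigenvector_fields_implies_perfectlySpanning_general T K E hK hcantor hcont heig hdense
end
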